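/- Among the eight binary operations c on the three truth values {t, f, ⊤} satisfying c(x, y) = f whenever x = f or y = f, c(t, t) = t, and c(x, y) ∈ {t, ⊤} for (x, y) ∈ {(t, ⊤), (⊤, t), (⊤, ⊤)}, there is exactly one satisfying, for all x, y: c(x, f) = f, c(x, t) = x, c(x, x) = x, and c(x, y) = c(y, x); namely the operation with c(t, ⊤) = c(⊤, t) = c(⊤, ⊤) = ⊤ (the conjunction of LP^{→,F}). -/
import Mathlib


/-- The three truth values: true, false, both-true-and-false. -/
inductive TV : Type
  | t : TV
  | f : TV
  | b : TV
  deriving DecidableEq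

/-- Formulas of LP^{→,F}: propositional variables, falsity constant,
    negation, conjunction, disjunction, implication. -/
inductive Fm : Type
  | var : ℕ → Fm
  | fls : Fm
  | neg : Fm → Fm
  | conj : Fm → Fm → Fm
  | disj : Fm → Fm → Fm
  | impl : Fm → Fm → Fm
  deriving DecidableEq

/-- The LP^{→,F} negation truth function. -/
def TV.negLP : TV → TV
  | .t => .f
  | .f => .t
  | .b => .b

/-- The LP^{→,F} conjunction truth function. -/
def TV.andLP : TV → TV → TV
  | .f, _ => .f
  | _, .f => .f
  | .t, .t => .t
  | _, _ => .b

/-- The LP^{→,F} disjunction truth function. -/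
def TV.orLP : TV → TV → TV
  | .t, _ => .t
  | _, .t => .t
  | .f, .f => .f
  | _, _ => .b

/-- The LP^{→,F} implication truth function: t if the antecedent is f,
    otherwise the value of the consequent. -/
def TV.implLP : TV → TV → TV
  | .f, _ => .t
  | _, y => y

/-- A valuation for LP^{→,F}. -/
def IsValuation (ν : Fm → TV) : Prop :=
  ν .fls = .f ∧
  (∀ A, ν (.neg A) = (ν A).negLP) ∧
  (∀ A B, ν (.conj A B) = (ν A).andLP (ν B)) ∧
  (∀ A B, ν (.disj A B) = (ν A).orLP (ν B)) ∧
  (∀ A B, ν (.impl A B) = (ν A).implLP (ν B))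

/-- Logical equivalence in LP^{→,F}. -/
def LEquiv (A B : Fm) : Prop := ∀ ν : Fm → TV, IsValuation ν → ν A = ν B

/-- The truth constant T, an abbreviation for ¬F. -/
def Fm.tru : Fm := .neg .fls

/-- A truth value is designated iff it is t or ⊤. -/
def Designated (v : TV) : Prop := v = .t ∨ v = .b

/-- Semantic logical consequence in LP^{→,F}. -/
def LPCons (Γ : Set Fm) (A : Fm) : Prop :=
  ∀ ν : Fm → TV, IsValuation ν → ((∃ B ∈ Γ, ν B = .f) ∨ Designated (ν A))

/-- Validity in LP^{→,F}. -/
def LPValid (A : Fm) : Prop := ∀ ν : Fm → TV, IsValuation ν → Designated (ν A)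

/-- Among the eight conjunction truth tables admitted by the AAZ
    non-deterministic truth table, exactly one satisfies the identity,
    annihilation, idempotent and commutative laws: the LP^{→,F} conjunction. -/
theorem unique_conjunction :
    ∀ c : TV → TV → TV,
      (((∀ y, c .f y = .f) ∧ (∀ x, c x .f = .f) ∧ c .t .t = .t ∧
        (c .t .b = .t ∨ c .t .b = .b) ∧
        (c .b .t = .t ∨ c .b .t = .b) ∧
        (c .b .b = .t ∨ c .b .b = .b)) ∧
       ((∀ x, c x .f = .f) ∧ (∀ x, c x .t = x) ∧
        (∀ x, c x x = x) ∧ (∀ x y, c x y = c y x)))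
      ↔ c = TV.andLP := by
  intro c
  constructor
  · rintro ⟨⟨hf, hf2, htt, htb, hbt, hbb⟩, ⟨_, hid, hidm, hcom⟩⟩
    funext x y
    cases x <;> cases y <;>
      simp_all [TV.andLP] <;>
      first
      | rfl
      | (have := hid TV.b; simp_all)
      | (have := hcom TV.t TV.b; have := hid TV.b; simp_all)
  · rintro rfl
    refine ⟨⟨?_, ?_, rfl, ?_, ?_, ?_⟩, ?_, ?_, ?_, ?_⟩ <;>
      try (intro x; cases x <;> rfl)
    · right; rfl
    · right; rfl
    · right; rfl
    · intro x y; cases x <;> cases y <;> rfl
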